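/- arXiv:2306.13221 — 5 statements merged into one kernel-verified Lean document; each statement's English description precedes it below -/
import Mathlib

section
/- Let I be a smooth first integral of y'' = φ (i.e. D(I) = 0) with ∂_zI nonvanishing, and set μ := -∂_zI (an integrating factor). Let ν be smooth nonvanishing with ν·∂_yI + D(ν)·∂_zI = 0. Then -D(μ)/μ = -D(ν)/ν + ∂_zφ holds everywhere. -/
noncomputable def pdx (F : ℝ × ℝ × ℝ → ℝ) (p : ℝ × ℝ × ℝ) : ℝ :=
  deriv (fun t => F (t, p.2.1, p.2.2)) p.1

noncomputable def pdy (F : ℝ × ℝ × ℝ → ℝ) (p : ℝ × ℝ × ℝ) : ℝ :=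
  deriv (fun t => F (p.1, t, p.2.2)) p.2.1

noncomputable def pdz (F : ℝ × ℝ × ℝ → ℝ) (p : ℝ × ℝ × ℝ) : ℝ :=
  deriv (fun t => F (p.1, p.2.1, t)) p.2.2

/-- The Cartan vector field `D = ∂ₓ + z ∂_y + φ ∂_z` of `y'' = φ(x,y,y')`. -/
noncomputable def Dtot (φ F : ℝ × ℝ × ℝ → ℝ) (p : ℝ × ℝ × ℝ) : ℝ :=
  pdx F p + p.2.2 * pdy F p + φ p * pdz F p

/-- Evaluation of a polynomial in three variables at a point of ℝ³. -/
noncomputable def mev (P : MvPolynomial (Fin 3) ℝ) (p : ℝ × ℝ × ℝ) : ℝ :=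
  MvPolynomial.eval ![p.1, p.2.1, p.2.2] P


lemma hasDerivAt_line_x (F : ℝ × ℝ × ℝ → ℝ) (hF : Differentiable ℝ F) (a b t : ℝ) :
    HasDerivAt (fun s => F (s, a, b)) (fderiv ℝ F (t, a, b) (1, 0, 0)) t := by
  have h : HasDerivAt (fun s : ℝ => ((s, a, b) : ℝ × ℝ × ℝ)) (1, 0, 0) t :=
    HasDerivAt.prodMk (hasDerivAt_id t) (HasDerivAt.prodMk (hasDerivAt_const t a) (hasDerivAt_const t b))
  exact (hF (t, a, b)).hasFDerivAt.comp_hasDerivAt t h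

lemma hasDerivAt_line_y (F : ℝ × ℝ × ℝ → ℝ) (hF : Differentiable ℝ F) (a b t : ℝ) :
    HasDerivAt (fun s => F (a, s, b)) (fderiv ℝ F (a, t, b) (0, 1, 0)) t := by
  have h : HasDerivAt (fun s : ℝ => ((a, s, b) : ℝ × ℝ × ℝ)) (0, 1, 0) t :=
    HasDerivAt.prodMk (hasDerivAt_const t a) (HasDerivAt.prodMk (hasDerivAt_id t) (hasDerivAt_const t b))
  exact (hF (a, t, b)).hasFDerivAt.comp_hasDerivAt t h

lemma hasDerivAt_line_z (F : ℝ × ℝ × ℝ → ℝ) (hF : Differentiable ℝ F) (a b t : ℝ) :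
    HasDerivAt (fun s => F (a, b, s)) (fderiv ℝ F (a, b, t) (0, 0, 1)) t := by
  have h : HasDerivAt (fun s : ℝ => ((a, b, s) : ℝ × ℝ × ℝ)) (0, 0, 1) t :=
    HasDerivAt.prodMk (hasDerivAt_const t a) (HasDerivAt.prodMk (hasDerivAt_const t b) (hasDerivAt_id t))
  exact (hF (a, b, t)).hasFDerivAt.comp_hasDerivAt t h

lemma pdx_eq (F : ℝ × ℝ × ℝ → ℝ) (hF : Differentiable ℝ F) (p : ℝ × ℝ × ℝ) :
    pdx F p = fderiv ℝ F p (1, 0, 0) := by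
  have := (hasDerivAt_line_x F hF p.2.1 p.2.2 p.1).deriv
  simpa [pdx] using this

lemma pdy_eq (F : ℝ × ℝ × ℝ → ℝ) (hF : Differentiable ℝ F) (p : ℝ × ℝ × ℝ) :
    pdy F p = fderiv ℝ F p (0, 1, 0) := by
  have := (hasDerivAt_line_y F hF p.1 p.2.2 p.2.1).deriv
  simpa [pdy] using this

lemma pdz_eq (F : ℝ × ℝ × ℝ → ℝ) (hF : Differentiable ℝ F) (p : ℝ × ℝ × ℝ) :
    pdz F p = fderiv ℝ F p (0, 0, 1) := by
  have := (hasDerivAt_line_z F hF p.1 p.2.1 p.2.2).deriv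
  simpa [pdz] using this

lemma contDiff_fderiv_apply (F : ℝ × ℝ × ℝ → ℝ) (hF : ContDiff ℝ (⊤ : ℕ∞) F) (v : ℝ × ℝ × ℝ) :
    ContDiff ℝ (⊤ : ℕ∞) (fun q => fderiv ℝ F q v) :=
  (hF.fderiv_right (by simp)).clm_apply contDiff_const

lemma clairaut (F : ℝ × ℝ × ℝ → ℝ) (hF : ContDiff ℝ (⊤ : ℕ∞) F) (p v w : ℝ × ℝ × ℝ) :
    fderiv ℝ (fun q => fderiv ℝ F q v) p w = fderiv ℝ (fun q => fderiv ℝ F q w) p v := by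
  have hFd : Differentiable ℝ F := hF.differentiable (by simp)
  have h2 : HasFDerivAt (fderiv ℝ F) (fderiv ℝ (fderiv ℝ F) p) p :=
    (((hF.fderiv_right (m := (⊤ : ℕ∞)) (by simp)).differentiable (by simp)) p).hasFDerivAt
  have hsymm := second_derivative_symmetric (f := F) (fun y => (hFd y).hasFDerivAt) h2
  have key : ∀ u : ℝ × ℝ × ℝ, HasFDerivAt (fun q => fderiv ℝ F q u)
      ((ContinuousLinearMap.apply ℝ ℝ u).comp (fderiv ℝ (fderiv ℝ F) p)) p :=
    fun u => (ContinuousLinearMap.apply ℝ ℝ u).hasFDerivAt.comp p h2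
  rw [(key v).fderiv, (key w).fderiv]
  exact hsymm w v

/-- For a first integral I of `y'' = φ` with μ := -∂_zI an integrating factor and
ν a symmetry coefficient annihilating I, one has `-D(μ)/μ = -D(ν)/ν + ∂_zφ`. -/
theorem mu_nu_relation (φ I ν : ℝ × ℝ × ℝ → ℝ)
    (hφ : ContDiff ℝ (⊤ : ℕ∞) φ) (hI : ContDiff ℝ (⊤ : ℕ∞) I) (hν : ContDiff ℝ (⊤ : ℕ∞) ν)
    (hDI : ∀ p, Dtot φ I p = 0)
    (hIz : ∀ p, pdz I p ≠ 0)
    (hνne : ∀ p, ν p ≠ 0)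
    (hsym : ∀ p, ν p * pdy I p + Dtot φ ν p * pdz I p = 0) :
    ∀ p, -(Dtot φ (fun q => -(pdz I q)) p) / (-(pdz I p))
      = -(Dtot φ ν p) / ν p + pdz φ p := by
  intro p
  obtain ⟨x, y, z⟩ := p
  have hId : Differentiable ℝ I := hI.differentiable (by simp)
  have hφd : Differentiable ℝ φ := hφ.differentiable (by simp)
  set e1 : ℝ × ℝ × ℝ := (1, 0, 0) with he1
  set e2 : ℝ × ℝ × ℝ := (0, 1, 0) with he2
  set e3 : ℝ × ℝ × ℝ := (0, 0, 1) with he3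
  set A : (ℝ × ℝ × ℝ) → (ℝ × ℝ × ℝ) → ℝ := fun v q => fderiv ℝ I q v with hA
  have hAc : ∀ v, ContDiff ℝ (⊤ : ℕ∞) (A v) := fun v => contDiff_fderiv_apply I hI v
  have hAd : ∀ v, Differentiable ℝ (A v) := fun v => (hAc v).differentiable (by simp)
  set B : (ℝ × ℝ × ℝ) → (ℝ × ℝ × ℝ) → ℝ := fun w v => fderiv ℝ (A v) (x, y, z) w with hB
  have hBsymm : ∀ v w, B w v = B v w := fun v w => clairaut I hI (x, y, z) v w
  -- expand Dtot φ I along the z-line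
  have hexp : (fun t => Dtot φ I (x, y, t)) =
      fun t => A e1 (x, y, t) + t * A e2 (x, y, t) + φ (x, y, t) * A e3 (x, y, t) := by
    funext t
    simp [Dtot, pdx_eq I hId, pdy_eq I hId, pdz_eq I hId, hA, he1, he2, he3]
  have hA1 := hasDerivAt_line_z (A e1) (hAd e1) x y z
  have hA2 := hasDerivAt_line_z (A e2) (hAd e2) x y z
  have hA3 := hasDerivAt_line_z (A e3) (hAd e3) x y z
  have hφz := hasDerivAt_line_z φ hφd x y z
  have hD : HasDerivAt (fun t => Dtot φ I (x, y, t))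
      (B e3 e1 + (1 * A e2 (x, y, z) + z * B e3 e2)
        + (fderiv ℝ φ (x, y, z) e3 * A e3 (x, y, z) + φ (x, y, z) * B e3 e3)) z := by
    rw [hexp]
    exact (hA1.add ((hasDerivAt_id z).mul hA2)).add (hφz.mul hA3)
  have hzero : B e3 e1 + (1 * A e2 (x, y, z) + z * B e3 e2)
        + (fderiv ℝ φ (x, y, z) e3 * A e3 (x, y, z) + φ (x, y, z) * B e3 e3) = 0 := by
    have h0 : HasDerivAt (fun t => Dtot φ I (x, y, t)) 0 z := by
      have : (fun t => Dtot φ I (x, y, t)) = fun _ => (0 : ℝ) := funext fun t => hDI _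
      rw [this]; exact hasDerivAt_const z 0
    exact hD.unique h0
  -- compute Dtot φ (fun q => -(pdz I q))
  have hDneg : Dtot φ (fun q => -(pdz I q)) (x, y, z)
      = -(B e1 e3 + z * B e2 e3 + φ (x, y, z) * B e3 e3) := by
    have hfun : (fun q => -(pdz I q)) = fun q => -(A e3 q) := by
      funext q; rw [pdz_eq I hId q]
    rw [hfun]
    have hnd : Differentiable ℝ (fun q => -(A e3 q)) := (hAd e3).neg
    have h1 : pdx (fun q => -(A e3 q)) (x, y, z) = -(B e1 e3) := by
      rw [pdx_eq _ hnd]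
      have : fderiv ℝ (fun q => -(A e3 q)) (x, y, z) = -(fderiv ℝ (A e3) (x, y, z)) :=
        fderiv_neg
      rw [this]; simp [hB, he1, he2, he3]
    have h2 : pdy (fun q => -(A e3 q)) (x, y, z) = -(B e2 e3) := by
      rw [pdy_eq _ hnd]
      have : fderiv ℝ (fun q => -(A e3 q)) (x, y, z) = -(fderiv ℝ (A e3) (x, y, z)) :=
        fderiv_neg
      rw [this]; simp [hB, he1, he2, he3]
    have h3 : pdz (fun q => -(A e3 q)) (x, y, z) = -(B e3 e3) := by
      rw [pdz_eq _ hnd]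
      have : fderiv ℝ (fun q => -(A e3 q)) (x, y, z) = -(fderiv ℝ (A e3) (x, y, z)) :=
        fderiv_neg
      rw [this]; simp [hB, he1, he2, he3]
    simp only [Dtot, h1, h2, h3]; ring
  -- rewrite pd's at the point
  have hpy : pdy I (x, y, z) = A e2 (x, y, z) := pdy_eq I hId _
  have hpz : pdz I (x, y, z) = A e3 (x, y, z) := pdz_eq I hId _
  have hpφ : pdz φ (x, y, z) = fderiv ℝ φ (x, y, z) e3 := pdz_eq φ hφd _
  have hsymB : B e1 e3 + z * B e2 e3 + φ (x, y, z) * B e3 e3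
      = -(A e2 (x, y, z)) - fderiv ℝ φ (x, y, z) e3 * A e3 (x, y, z) := by
    rw [hBsymm e3 e1, hBsymm e3 e2]
    linarith [hzero]
  have hIzp := hIz (x, y, z)
  have hνp := hνne (x, y, z)
  have hs := hsym (x, y, z)
  rw [hpz] at hIzp ⊢
  rw [hpy, hpz] at hs
  rw [hDneg, hsymB, hpφ]
  have hIzp' : (-A e3 (x, y, z)) ≠ 0 := neg_ne_zero.mpr hIzp
  field_simp
  linear_combination (1 : ℝ) * hs
end

section
/- Let p, q, M, N be polynomials in three variables satisfying the identity p²N² = -pqN·∂_zM + pqM·∂_zN + q²N·∂_yM - q²M·∂_yN + q·∂ₓp·N² + z·q·∂_yp·N² + q·∂_zp·N·M - p·∂ₓq·N² - z·p·∂_yq·N² - p·∂_zq·N·M, with p, q, N nonzero. Write d_M, d_N, d_p, d_q for the total degrees. If d_M ≤ d_N + 1 then d_p ≤ d_q; if d_M > d_N + 1 then d_p ≤ d_q + d_M - d_N - 1. -/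
/-! Regrouped, the right-hand side of the identity is a sum of terms `c * ∂ᵢ g`, and a partial
derivative lowers the total degree by one. With `a, b, m, n` the degrees of `p, q, M, N` and
`k = max(0, m - n - 1)`, each term then has degree at most `a + b + 2n + k`, provided `b ≤ a`
(needed for the two terms with cofactor `q²`). Since `ℝ[x,y,z]` is a domain, the left-hand side
`p²N²` has degree exactly `2a + 2n`. So assuming `a > b + k`, which gives `b < a`, yields
`2a + 2n ≤ a + b + 2n + k`, a contradiction. -/

namespace MvPolynomial

variable {σ R : Type*} [CommSemiring R]

theorem totalDegree_pderiv_lt {i : σ} {f : MvPolynomial σ R} (h : pderiv i f ≠ 0) :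
    (pderiv i f).totalDegree < f.totalDegree := by
  obtain ⟨s, hs, hsup⟩ := (pderiv i f).support.exists_mem_eq_sup
    (support_nonempty.mpr h) fun s => s.sum fun _ e => e
  have hf : s + Finsupp.single i 1 ∈ f.support := by
    rw [mem_support_iff, coeff_pderiv] at hs
    exact mem_support_iff.mpr (left_ne_zero_of_mul hs)
  have hdeg := le_totalDegree hf
  rw [Finsupp.sum_add_index' (fun _ => rfl) (fun _ _ _ => rfl),
    Finsupp.sum_single_index rfl] at hdeg
  rw [totalDegree, hsup]
  omega

theorem totalDegree_mul_pderiv_le (i : σ) {c f : MvPolynomial σ R} {n : ℕ}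
    (h : c.totalDegree + f.totalDegree ≤ n + 1) : (c * pderiv i f).totalDegree ≤ n := by
  rcases eq_or_ne (pderiv i f) 0 with h0 | h0
  · simp [h0]
  · have := totalDegree_pderiv_lt h0
    have := totalDegree_mul c (pderiv i f)
    omega

end MvPolynomial

open MvPolynomial in
theorem degree_bounds_general (M N p q : MvPolynomial (Fin 3) ℝ)
    (hp : p ≠ 0) (hN : N ≠ 0)
    (hid : p ^ 2 * N ^ 2 =
      -(p * q * N * pderiv 2 M) + p * q * M * pderiv 2 N
        + q ^ 2 * N * pderiv 1 M - q ^ 2 * M * pderiv 1 N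
        + q * pderiv 0 p * N ^ 2 + X 2 * q * pderiv 1 p * N ^ 2
        + q * pderiv 2 p * N * M
        - p * pderiv 0 q * N ^ 2 - X 2 * p * pderiv 1 q * N ^ 2
        - p * pderiv 2 q * N * M) :
    (M.totalDegree ≤ N.totalDegree + 1 → p.totalDegree ≤ q.totalDegree) ∧
    (M.totalDegree > N.totalDegree + 1 →
      p.totalDegree ≤ q.totalDegree + M.totalDegree - N.totalDegree - 1) := by
  suffices p.totalDegree ≤ q.totalDegree + (M.totalDegree - N.totalDegree - 1) from
    ⟨fun _ => by omega, fun _ => by omega⟩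
  by_contra! hlt
  have hregroup : p ^ 2 * N ^ 2 =
      q * N ^ 2 * pderiv 0 p + X 2 * q * N ^ 2 * pderiv 1 p + q * N * M * pderiv 2 p
        - p * N ^ 2 * pderiv 0 q - X 2 * p * N ^ 2 * pderiv 1 q - p * N * M * pderiv 2 q
        + q ^ 2 * N * pderiv 1 M - p * q * N * pderiv 2 M
        - q ^ 2 * M * pderiv 1 N + p * q * M * pderiv 2 N := by
    linear_combination hid
  have hrhs : p ^ 2 * N ^ 2 ∈ restrictTotalDegree (Fin 3) ℝ
      (p.totalDegree + q.totalDegree + 2 * N.totalDegree + (M.totalDegree - N.totalDegree - 1)) := by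
    rw [hregroup]
    repeat' (first | refine add_mem ?_ ?_ | refine sub_mem ?_ ?_)
    all_goals
      rw [mem_restrictTotalDegree]
      apply totalDegree_mul_pderiv_le
      repeat (first | grw [totalDegree_mul] | grw [totalDegree_pow] | rw [totalDegree_X])
      omega
  rw [mem_restrictTotalDegree, sq, sq,
    totalDegree_mul_of_isDomain (mul_ne_zero hp hp) (mul_ne_zero hN hN),
    totalDegree_mul_of_isDomain hp hp, totalDegree_mul_of_isDomain hN hN] at hrhs
  omega

open MvPolynomial in
/-- Degree bounds on σ = p/q: from the polynomial identity coming from the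
determining equation, if deg M ≤ deg N + 1 then deg p ≤ deg q, and if
deg M > deg N + 1 then deg p ≤ deg q + deg M - deg N - 1. -/
theorem degree_bounds (M N p q : MvPolynomial (Fin 3) ℝ)
    (hp : p ≠ 0) (hq : q ≠ 0) (hN : N ≠ 0)
    (hid : p ^ 2 * N ^ 2 =
      -(p * q * N * pderiv 2 M) + p * q * M * pderiv 2 N
        + q ^ 2 * N * pderiv 1 M - q ^ 2 * M * pderiv 1 N
        + q * pderiv 0 p * N ^ 2 + X 2 * q * pderiv 1 p * N ^ 2
        + q * pderiv 2 p * N * M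
        - p * pderiv 0 q * N ^ 2 - X 2 * p * pderiv 1 q * N ^ 2
        - p * pderiv 2 q * N * M) :
    (M.totalDegree ≤ N.totalDegree + 1 → p.totalDegree ≤ q.totalDegree) ∧
    (M.totalDegree > N.totalDegree + 1 →
      p.totalDegree ≤ q.totalDegree + M.totalDegree - N.totalDegree - 1) :=
  degree_bounds_general M N p q hp hN hid
end

section
/- For the 2ODE y'' = (y'-1)(x⁴y' + 2x³y - x²y + y')/((x²y - 1)x²), the rational function σ(x,y,z) = -x²(z-1)/(x²y - 1) satisfies the determining equation D(σ) = σ² + (∂_zφ)·σ - ∂_yφ, where φ(x,y,z) = (z-1)(x⁴z + 2x³y - x²y + z)/((x²y-1)x²). -/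
noncomputable def phi12 (p : ℝ × ℝ × ℝ) : ℝ :=
  (p.2.2 - 1) * (p.1 ^ 4 * p.2.2 + 2 * p.1 ^ 3 * p.2.1 - p.1 ^ 2 * p.2.1 + p.2.2)
    / ((p.1 ^ 2 * p.2.1 - 1) * p.1 ^ 2)

noncomputable def sigma12 (p : ℝ × ℝ × ℝ) : ℝ :=
  -(p.1 ^ 2 * (p.2.2 - 1)) / (p.1 ^ 2 * p.2.1 - 1)

lemma pdx_eq_of_hasDerivAt {F : ℝ × ℝ × ℝ → ℝ} {x y z f' : ℝ}
    (h : HasDerivAt (fun t => F (t, y, z)) f' x) : pdx F (x, y, z) = f' :=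
  h.deriv

lemma pdy_eq_of_hasDerivAt {F : ℝ × ℝ × ℝ → ℝ} {x y z f' : ℝ}
    (h : HasDerivAt (fun t => F (x, t, z)) f' y) : pdy F (x, y, z) = f' :=
  h.deriv

lemma pdz_eq_of_hasDerivAt {F : ℝ × ℝ × ℝ → ℝ} {x y z f' : ℝ}
    (h : HasDerivAt (fun t => F (x, y, t)) f' z) : pdz F (x, y, z) = f' :=
  h.deriv

section Partials

variable {x y z : ℝ}

lemma pdx_sigma12 (hxy : x ^ 2 * y ≠ 1) :
    pdx sigma12 (x, y, z) = 2 * x * (z - 1) / (x ^ 2 * y - 1) ^ 2 := by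
  have hd : x ^ 2 * y - 1 ≠ 0 := sub_ne_zero.2 hxy
  have hnum := ((hasDerivAt_pow 2 x).mul_const (z - 1)).fun_neg
  have hden := ((hasDerivAt_pow 2 x).mul_const y).sub_const 1
  exact pdx_eq_of_hasDerivAt ((hnum.div hden hd).congr_deriv (by field_simp; ring))

lemma pdy_sigma12 (hxy : x ^ 2 * y ≠ 1) :
    pdy sigma12 (x, y, z) = x ^ 4 * (z - 1) / (x ^ 2 * y - 1) ^ 2 := by
  have hd : x ^ 2 * y - 1 ≠ 0 := sub_ne_zero.2 hxy
  have hden := ((hasDerivAt_id' y).const_mul (x ^ 2)).sub_const 1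
  exact pdy_eq_of_hasDerivAt (((hasDerivAt_const y (-(x ^ 2 * (z - 1)))).div hden hd).congr_deriv
    (by field_simp; ring))

lemma pdz_sigma12 :
    pdz sigma12 (x, y, z) = -x ^ 2 / (x ^ 2 * y - 1) := by
  have hnum := (((hasDerivAt_id' z).sub_const 1).const_mul (x ^ 2)).fun_neg
  exact pdz_eq_of_hasDerivAt ((hnum.div_const (x ^ 2 * y - 1)).congr_deriv (by ring))

lemma pdy_phi12 (hx : x ≠ 0) (hxy : x ^ 2 * y ≠ 1) :
    pdy phi12 (x, y, z) = -(z - 1) * ((x ^ 4 + 1) * z + 2 * x - 1) / (x ^ 2 * y - 1) ^ 2 := by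
  have hd : (x ^ 2 * y - 1) * x ^ 2 ≠ 0 := mul_ne_zero (sub_ne_zero.2 hxy) (pow_ne_zero 2 hx)
  have hnum := (((((hasDerivAt_id' y).const_mul (2 * x ^ 3)).const_add (x ^ 4 * z)).fun_sub
    ((hasDerivAt_id' y).const_mul (x ^ 2))).add_const z).const_mul (z - 1)
  have hden := (((hasDerivAt_id' y).const_mul (x ^ 2)).sub_const 1).mul_const (x ^ 2)
  exact pdy_eq_of_hasDerivAt ((hnum.div hden hd).congr_deriv (by field_simp; ring))

lemma pdz_phi12 :
    pdz phi12 (x, y, z) =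
      ((x ^ 4 + 1) * (2 * z - 1) + 2 * x ^ 3 * y - x ^ 2 * y) / ((x ^ 2 * y - 1) * x ^ 2) := by
  have hnum := ((hasDerivAt_id' z).sub_const 1).fun_mul
    (((((hasDerivAt_id' z).const_mul (x ^ 4)).add_const (2 * x ^ 3 * y)).sub_const
      (x ^ 2 * y)).fun_add (hasDerivAt_id' z))
  exact pdz_eq_of_hasDerivAt ((hnum.div_const ((x ^ 2 * y - 1) * x ^ 2)).congr_deriv (by ring))

end Partials

/-- The rational function σ = -x²(z-1)/(x²y-1) satisfies the determining equation
for the 2ODE y'' = (y'-1)(x⁴y' + 2x³y - x²y + y')/((x²y-1)x²). -/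
theorem sigma12_determining :
    ∀ p : ℝ × ℝ × ℝ, p.1 ≠ 0 → p.1 ^ 2 * p.2.1 ≠ 1 →
      Dtot phi12 sigma12 p =
        sigma12 p ^ 2 + pdz phi12 p * sigma12 p - pdy phi12 p := by
  rintro ⟨x, y, z⟩ hx hxy
  have hd : x ^ 2 * y - 1 ≠ 0 := sub_ne_zero.2 hxy
  rw [Dtot, pdx_sigma12 hxy, pdy_sigma12 hxy, pdz_sigma12, pdy_phi12 hx hxy, pdz_phi12]
  simp only [phi12, sigma12]
  field_simp
  ring
end

section
/- For the Helmholtz oscillator with friction y'' = -c·y² + a·y' + (6/25)·a²·y, the function I(x,y,z) = (72a⁴y - 600a²cy² + 1250c²y³ + 360a³z - 1500acyz + 1875cz²)·e^{-(6a/5)x} is a first integral, i.e. ∂ₓI + z·∂_yI + (-cy² + az + (6/25)a²y)·∂_zI = 0 identically on ℝ³. -/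
/-! `I = P(y, z) e^{kx}` with `k = -6a/5`, so `D I = (k P + z ∂_y P + φ ∂_z P) e^{kx}`; for this
particular cubic `P` the bracket vanishes identically as a polynomial in `a, c, y, z`. -/

open Real

section MulExp

variable (φ : ℝ × ℝ × ℝ → ℝ) (G : ℝ → ℝ → ℝ) (k : ℝ) (p : ℝ × ℝ × ℝ)

theorem pdx_mul_exp :
    pdx (fun q => G q.2.1 q.2.2 * exp (k * q.1)) p = G p.2.1 p.2.2 * (k * exp (k * p.1)) := by
  have h : HasDerivAt (fun t => exp (k * t)) (exp (k * p.1) * k) p.1 :=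
    ((hasDerivAt_id p.1).const_mul k).exp.congr_deriv (by simp)
  rw [mul_comm k]
  exact (h.const_mul (G p.2.1 p.2.2)).deriv

variable {G p}

theorem pdy_mul_exp {Gy : ℝ} (hy : HasDerivAt (fun t => G t p.2.2) Gy p.2.1) :
    pdy (fun q => G q.2.1 q.2.2 * exp (k * q.1)) p = Gy * exp (k * p.1) :=
  (hy.mul_const (exp (k * p.1))).deriv

theorem pdz_mul_exp {Gz : ℝ} (hz : HasDerivAt (fun t => G p.2.1 t) Gz p.2.2) :
    pdz (fun q => G q.2.1 q.2.2 * exp (k * q.1)) p = Gz * exp (k * p.1) :=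
  (hz.mul_const (exp (k * p.1))).deriv

theorem Dtot_mul_exp {Gy Gz : ℝ} (hy : HasDerivAt (fun t => G t p.2.2) Gy p.2.1)
    (hz : HasDerivAt (fun t => G p.2.1 t) Gz p.2.2) :
    Dtot φ (fun q => G q.2.1 q.2.2 * exp (k * q.1)) p
      = (k * G p.2.1 p.2.2 + p.2.2 * Gy + φ p * Gz) * exp (k * p.1) := by
  rw [Dtot, pdx_mul_exp, pdy_mul_exp k hy, pdz_mul_exp k hz]
  ring

end MulExp

section Helmholtz

variable (a c : ℝ)

def helmholtzPoly (y z : ℝ) : ℝ :=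
  72 * a ^ 4 * y - 600 * a ^ 2 * c * y ^ 2 + 1250 * c ^ 2 * y ^ 3 + 360 * a ^ 3 * z
    - 1500 * a * c * y * z + 1875 * c * z ^ 2

theorem hasDerivAt_helmholtzPoly_fst (y z : ℝ) :
    HasDerivAt (fun t => helmholtzPoly a c t z)
      (72 * a ^ 4 - 1200 * a ^ 2 * c * y + 3750 * c ^ 2 * y ^ 2 - 1500 * a * c * z) y := by
  have h := ((((((hasDerivAt_id' y).const_mul (72 * a ^ 4)).sub
    ((hasDerivAt_pow 2 y).const_mul (600 * a ^ 2 * c))).add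
    ((hasDerivAt_pow 3 y).const_mul (1250 * c ^ 2))).add_const (360 * a ^ 3 * z)).sub
    (((hasDerivAt_id' y).const_mul (1500 * a * c)).mul_const z)).add_const (1875 * c * z ^ 2)
  unfold helmholtzPoly
  exact h.congr_deriv (by norm_num; ring)

theorem hasDerivAt_helmholtzPoly_snd (y z : ℝ) :
    HasDerivAt (fun t => helmholtzPoly a c y t) (360 * a ^ 3 - 1500 * a * c * y + 3750 * c * z) z := by
  have h := ((((hasDerivAt_id' z).const_mul (360 * a ^ 3)).const_add
    (72 * a ^ 4 * y - 600 * a ^ 2 * c * y ^ 2 + 1250 * c ^ 2 * y ^ 3)).sub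
    ((hasDerivAt_id' z).const_mul (1500 * a * c * y))).add ((hasDerivAt_pow 2 z).const_mul (1875 * c))
  unfold helmholtzPoly
  exact h.congr_deriv (by norm_num; ring)

end Helmholtz

/-- First integral of the Helmholtz oscillator with friction, case b = (6/25)a². -/
theorem helmholtz_case1 (a c : ℝ) :
    ∀ p : ℝ × ℝ × ℝ,
      Dtot (fun q => -c * q.2.1 ^ 2 + a * q.2.2 + (6 / 25) * a ^ 2 * q.2.1)
        (fun q => (72 * a ^ 4 * q.2.1 - 600 * a ^ 2 * c * q.2.1 ^ 2
            + 1250 * c ^ 2 * q.2.1 ^ 3 + 360 * a ^ 3 * q.2.2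
            - 1500 * a * c * q.2.1 * q.2.2 + 1875 * c * q.2.2 ^ 2)
          * Real.exp (-(6 * a / 5) * q.1)) p = 0 := by
  rintro ⟨x, y, z⟩
  refine (Dtot_mul_exp _ (G := helmholtzPoly a c) _ (hasDerivAt_helmholtzPoly_fst a c y z)
    (hasDerivAt_helmholtzPoly_snd a c y z)).trans ?_
  simp only [helmholtzPoly]
  ring
end

section
/- For the modified Duffing–van der Pol system ẍ + ε(1 - x²)ẋ + x + α·x·ẋ + β·x² + γ·x³ = f·cos(ωt) with α, β ≠ 0, γ = -1/3 - (4/3)·β²/α², ε = α/(2β) + 2β/α, and α²ω² + 4β² ≠ 0, the function I(t,x,v) = (-v + ((α² + 4β²)/(6αβ))·x³ - (α/2)·x² - (α/(2β))·x)·e^{(2β/α)t} + (fα·(sin(ωt)·αω + 2cos(ωt)·β)/(α²ω² + 4β²))·e^{(2β/α)t} is a first integral: its total time derivative along solutions (with ẋ = v and v̇ = -ε(1-x²)v - x - αxv - βx² - γx³ + f·cos(ωt)) vanishes identically. -/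
/-!
With `c = 2β/α`, the integral is `(-v + P x + B t) · exp (c t)`, where `P` is the cubic in `x` and
`B t = f (ω sin ωt + c cos ωt) / (ω² + c²)` is the periodic solution of `B' + c B = f cos ωt`.
Along the flow its derivative is therefore `exp (c t) · (c (-v + P x) + v P' x - Φ₀ x v)`, with `Φ₀`
the unforced part of the vector field, and the relations defining `γ` and `ε` are exactly what make
this polynomial vanish.
-/

open Real

theorem Dtot_eq_of_hasDerivAt {φ F : ℝ × ℝ × ℝ → ℝ} {t x v a b d : ℝ}
    (ht : HasDerivAt (fun s => F (s, x, v)) a t)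
    (hx : HasDerivAt (fun y => F (t, y, v)) b x)
    (hv : HasDerivAt (fun w => F (t, x, w)) d v) :
    Dtot φ F (t, x, v) = a + v * b + φ (t, x, v) * d := by
  simp only [Dtot, pdx, pdy, pdz, ht.deriv, hx.deriv, hv.deriv]

theorem Dtot_neg_add_mul_exp {φ F : ℝ × ℝ × ℝ → ℝ} {P B : ℝ → ℝ} {c t x v P' B' : ℝ}
    (hP : HasDerivAt P P' x) (hB : HasDerivAt B B' t)
    (hF : ∀ q, F q = (-q.2.2 + P q.2.1 + B q.1) * exp (c * q.1)) :
    Dtot φ F (t, x, v)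
      = (c * (-v + P x + B t) + v * P' + B' - φ (t, x, v)) * exp (c * t) := by
  have hexp : HasDerivAt (fun s => exp (c * s)) (exp (c * t) * c) t := by
    simpa using ((hasDerivAt_id t).const_mul c).exp
  obtain rfl : F = fun q => (-q.2.2 + P q.2.1 + B q.1) * exp (c * q.1) := funext hF
  rw [Dtot_eq_of_hasDerivAt ((hB.const_add (-v + P x)).mul hexp)
    (((hP.const_add (-v)).add_const (B t)).mul_const (exp (c * t)))
    ((((hasDerivAt_neg v).add_const (P x)).add_const (B t)).mul_const (exp (c * t)))]
  ring

theorem hasDerivAt_forced_response {c ω f : ℝ} (t : ℝ) (h : ω ^ 2 + c ^ 2 ≠ 0) :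
    HasDerivAt (fun s => f * (ω * sin (ω * s) + c * cos (ω * s)) / (ω ^ 2 + c ^ 2))
      (f * cos (ω * t) - c * (f * (ω * sin (ω * t) + c * cos (ω * t)) / (ω ^ 2 + c ^ 2))) t := by
  have hsin : HasDerivAt (fun s => sin (ω * s)) (cos (ω * t) * ω) t := by
    simpa using ((hasDerivAt_id t).const_mul ω).sin
  have hcos : HasDerivAt (fun s => cos (ω * s)) (-sin (ω * t) * ω) t := by
    simpa using ((hasDerivAt_id t).const_mul ω).cos
  refine ((((hsin.const_mul ω).add (hcos.const_mul c)).const_mul f).div_const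
    (ω ^ 2 + c ^ 2)).congr_deriv ?_
  field_simp
  ring

/-- First integral of the forced modified Duffing–van der Pol oscillator for the
parameter relations γ = -1/3 - (4/3)β²/α², ε = α/(2β) + 2β/α. Here p = (t,x,v). -/
theorem duffing_van_der_pol_first_integral (α β f ω γ ε : ℝ)
    (hα : α ≠ 0) (hβ : β ≠ 0) (hden : α ^ 2 * ω ^ 2 + 4 * β ^ 2 ≠ 0)
    (hγ : γ = -1 / 3 - (4 / 3) * β ^ 2 / α ^ 2)
    (hε : ε = α / (2 * β) + 2 * β / α) :
    ∀ p : ℝ × ℝ × ℝ,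
      Dtot (fun q => -ε * (1 - q.2.1 ^ 2) * q.2.2 - q.2.1 - α * q.2.1 * q.2.2
          - β * q.2.1 ^ 2 - γ * q.2.1 ^ 3 + f * Real.cos (ω * q.1))
        (fun q =>
          (-q.2.2 + ((α ^ 2 + 4 * β ^ 2) / (6 * α * β)) * q.2.1 ^ 3
              - (α / 2) * q.2.1 ^ 2 - (α / (2 * β)) * q.2.1)
            * Real.exp ((2 * β / α) * q.1)
          + (f * α * (Real.sin (ω * q.1) * α * ω + 2 * Real.cos (ω * q.1) * β)
              / (α ^ 2 * ω ^ 2 + 4 * β ^ 2)) * Real.exp ((2 * β / α) * q.1)) p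
        = 0 := by
  rintro ⟨t, x, v⟩
  set c := 2 * β / α with hc
  set k := (α ^ 2 + 4 * β ^ 2) / (6 * α * β) with hk
  have hωc : ω ^ 2 + c ^ 2 ≠ 0 := by
    have : ω ^ 2 + c ^ 2 = (α ^ 2 * ω ^ 2 + 4 * β ^ 2) / α ^ 2 := by
      rw [hc]
      field_simp
      ring
    rw [this]
    exact div_ne_zero hden (pow_ne_zero 2 hα)
  have hP : HasDerivAt (fun y => k * y ^ 3 - α / 2 * y ^ 2 - α / (2 * β) * y)
      (3 * k * x ^ 2 - α * x - α / (2 * β)) x := by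
    refine ((((hasDerivAt_pow 3 x).const_mul k).sub ((hasDerivAt_pow 2 x).const_mul (α / 2))).sub
      ((hasDerivAt_id x).const_mul (α / (2 * β)))).congr_deriv ?_
    norm_num
    ring
  have hautonomous : c * (-v + (k * x ^ 3 - α / 2 * x ^ 2 - α / (2 * β) * x))
      + v * (3 * k * x ^ 2 - α * x - α / (2 * β))
      = -ε * (1 - x ^ 2) * v - x - α * x * v - β * x ^ 2 - γ * x ^ 3 := by
    subst hγ hε
    rw [hc, hk]
    field_simp
    ring
  refine (Dtot_neg_add_mul_exp (c := c) hP (hasDerivAt_forced_response (f := f) t hωc) ?_).trans ?_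
  · rintro ⟨s, y, w⟩
    rw [hc, hk]
    field_simp
    ring
  · linear_combination exp (c * t) * hautonomous
end
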